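/- Let 1 < p < ∞ and let f : (0,∞) → ℝ be measurable with K(t, f) := ∫_0^∞ min(1, t/s)|f(s)| ds finite for all t > 0. Then ‖C|f|‖_{L^p(0,∞)} ≤ ( ∫_0^∞ (K(t,f)/t)^p dt )^{1/p} ≤ p · ‖C|f|‖_{L^p(0,∞)}. Consequently, f belongs to the real interpolation space (L^1, L^1(1/s))_{1−1/p, p} if and only if C|f| ∈ L^p(0,∞), i.e., (L^1, L^1(1/s))_{1−1/p, p} = Ces_p[0,∞) with equivalent norms. -/

import Mathlib

/-!
Since `min(1, t/s) = t ∫_{max(s,t)}^∞ u⁻² du`, Tonelli gives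
`K(t,f)/t = ∫_t^∞ C|f|(u) du/u`. This dominates `C|f|(t) = (1/t)∫_0^t |f|`, which gives
the lower bound, and Hardy's inequality for the dual averaging operator, proved by Hölder's
inequality and Tonelli, bounds its `L^p` norm by `p ‖C|f|‖_p`.
-/

open MeasureTheory Set

/-- The K-functional for the couple `(L^1, L^1(1/s))`:
`K(t,f) = ∫_0^∞ min(1, t/s)|f(s)| ds`, with values in `[0,∞]`. -/
noncomputable def Kf (f : ℝ → ℝ) (t : ℝ) : ENNReal :=
  ∫⁻ s in Set.Ioi (0:ℝ), ENNReal.ofReal (min 1 (t / s) * |f s|)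

/-- The `L^p(0,∞)`-quasinorm of the Cesàro transform `C|f|(t) = (1/t)∫_0^t |f(s)| ds`. -/
noncomputable def cesNorm (f : ℝ → ℝ) (p : ℝ) : ENNReal :=
  (∫⁻ t in Set.Ioi (0:ℝ),
      ((∫⁻ s in Set.Ioo (0:ℝ) t, ENNReal.ofReal |f s|) / ENNReal.ofReal t) ^ p) ^ (1 / p)

open scoped ENNReal

lemma lintegral_Ioi_ofReal_rpow {a r : ℝ} (ha : 0 < a) (hr : r < -1) :
    ∫⁻ u in Ioi a, ENNReal.ofReal (u ^ r) = ENNReal.ofReal (-a ^ (r + 1) / (r + 1)) := by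
  rw [← ofReal_integral_eq_lintegral_ofReal (integrableOn_Ioi_rpow_of_lt hr ha)
      ((ae_restrict_mem measurableSet_Ioi).mono fun u hu => Real.rpow_nonneg (ha.trans hu).le r),
    integral_Ioi_rpow_of_lt hr ha]

lemma lintegral_Ioo_ofReal_rpow {u r : ℝ} (hu : 0 < u) (hr : -1 < r) :
    ∫⁻ t in Ioo 0 u, ENNReal.ofReal (t ^ r) = ENNReal.ofReal (u ^ (r + 1) / (r + 1)) := by
  rw [← ofReal_integral_eq_lintegral_ofReal
      ((intervalIntegral.integrableOn_Ioo_rpow_iff hu).2 hr)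
      ((ae_restrict_mem measurableSet_Ioo).mono fun t ht => Real.rpow_nonneg ht.1.le r),
    ← integral_Ioc_eq_integral_Ioo, ← intervalIntegral.integral_of_le hu.le,
    integral_rpow (Or.inl hr), Real.zero_rpow (by linarith), sub_zero]

lemma ofReal_rpow_mul_ofReal_rpow {x : ℝ} (hx : 0 < x) (r s : ℝ) :
    ENNReal.ofReal (x ^ r) * ENNReal.ofReal (x ^ s) = ENNReal.ofReal (x ^ (r + s)) := by
  rw [← ENNReal.ofReal_mul (Real.rpow_nonneg hx.le r), ← Real.rpow_add hx]

lemma ofReal_rpow_rpow {x : ℝ} (hx : 0 < x) (r s : ℝ) :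
    ENNReal.ofReal (x ^ r) ^ s = ENNReal.ofReal (x ^ (r * s)) := by
  rw [ENNReal.ofReal_rpow_of_pos (Real.rpow_pos_of_pos hx r), ← Real.rpow_mul hx.le]

lemma div_ofReal_eq_mul_rpow_neg_one (a : ℝ≥0∞) {x : ℝ} (hx : 0 < x) :
    a / ENNReal.ofReal x = a * ENNReal.ofReal (x ^ (-1 : ℝ)) := by
  rw [Real.rpow_neg_one, ENNReal.ofReal_inv_of_pos hx, div_eq_mul_inv]

lemma lintegral_Ioi_mul_lintegral_Ioi_swap {c : ℝ} {a b : ℝ → ℝ≥0∞}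
    (ha : Measurable a) (hb : Measurable b) :
    ∫⁻ s in Ioi c, a s * ∫⁻ u in Ioi s, b u = ∫⁻ u in Ioi c, b u * ∫⁻ s in Ioo c u, a s := by
  set k : ℝ → ℝ → ℝ≥0∞ := fun s u =>
    {x : ℝ × ℝ | x.1 < x.2}.indicator (fun x => a x.1 * b x.2) (s, u)
  have hk : Measurable (Function.uncurry k) :=
    ((ha.comp measurable_fst).mul (hb.comp measurable_snd)).indicator
      (measurableSet_lt measurable_fst measurable_snd)
  have hleft : ∀ s ∈ Ioi c, a s * ∫⁻ u in Ioi s, b u = ∫⁻ u in Ioi c, k s u := by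
    intro s hs
    have hks : k s = (Ioi s).indicator fun u => a s * b u := by
      ext u; by_cases h : s < u <;> simp [k, h]
    rw [hks, lintegral_indicator measurableSet_Ioi, Measure.restrict_restrict measurableSet_Ioi,
      inter_eq_left.mpr (Ioi_subset_Ioi (le_of_lt hs)), lintegral_const_mul _ hb]
  have hright : ∀ u ∈ Ioi c, b u * ∫⁻ s in Ioo c u, a s = ∫⁻ s in Ioi c, k s u := by
    intro u _
    have hku : (fun s => k s u) = (Iio u).indicator fun s => a s * b u := by
      ext s; by_cases h : s < u <;> simp [k, h]
    rw [hku, lintegral_indicator measurableSet_Iio, Measure.restrict_restrict measurableSet_Iio,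
      Iio_inter_Ioi, lintegral_mul_const _ ha, mul_comm]
  rw [setLIntegral_congr_fun measurableSet_Ioi hleft,
    setLIntegral_congr_fun measurableSet_Ioi hright, lintegral_lintegral_swap hk.aemeasurable]

/-- The Hölder step of Hardy's inequality, for the splitting
`h u / u = (h u * u ^ (-1/p²)) * u ^ (1/p² - 1)`; the exponent `1/p²` gives the sharp constant. -/
lemma lintegral_Ioi_div_rpow_le {p : ℝ} (hp : 1 < p) {h : ℝ → ℝ≥0∞} (hh : Measurable h)
    {t : ℝ} (ht : 0 < t) :
    (∫⁻ u in Ioi t, h u / ENNReal.ofReal u) ^ p ≤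
      ENNReal.ofReal p ^ (p - 1) * (ENNReal.ofReal (t ^ (1 / p - 1)) *
        ∫⁻ u in Ioi t, h u ^ p * ENNReal.ofReal (u ^ (-1 / p))) := by
  have hpq : p.HolderConjugate p.conjExponent := .conjExponent hp
  have hp0 : 0 < p := hpq.pos
  have hp1 : p - 1 ≠ 0 := by linarith
  set φ : ℝ → ℝ≥0∞ := fun u => h u * ENNReal.ofReal (u ^ (-1 / p ^ 2))
  set ψ : ℝ → ℝ≥0∞ := fun u => ENNReal.ofReal (u ^ (1 / p ^ 2 - 1))
  have hsplit : ∫⁻ u in Ioi t, h u / ENNReal.ofReal u = ∫⁻ u in Ioi t, (φ * ψ) u := by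
    refine setLIntegral_congr_fun measurableSet_Ioi fun u hu => ?_
    rw [div_ofReal_eq_mul_rpow_neg_one _ (ht.trans hu), Pi.mul_apply, mul_assoc,
      ofReal_rpow_mul_ofReal_rpow (ht.trans hu)]
    ring_nf
  have hφ :
      ∫⁻ u in Ioi t, φ u ^ p = ∫⁻ u in Ioi t, h u ^ p * ENNReal.ofReal (u ^ (-1 / p)) := by
    refine setLIntegral_congr_fun measurableSet_Ioi fun u hu => ?_
    rw [ENNReal.mul_rpow_of_nonneg _ _ hp0.le, ofReal_rpow_rpow (ht.trans hu)]
    congr 3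
    field_simp
  have hψ : ∫⁻ u in Ioi t, ψ u ^ p.conjExponent = ENNReal.ofReal (p * t ^ (-1 / p)) := by
    have hexp : (1 / p ^ 2 - 1) * p.conjExponent = -1 / p - 1 := by
      rw [Real.conjExponent]
      field_simp
      ring
    rw [setLIntegral_congr_fun measurableSet_Ioi fun u hu => ofReal_rpow_rpow (ht.trans hu) _ _,
      hexp, lintegral_Ioi_ofReal_rpow ht (by rw [neg_div]; linarith [one_div_pos.mpr hp0]),
      show -1 / p - 1 + 1 = -1 / p by ring]
    congr 1
    field_simp
  have hholder := ENNReal.rpow_le_rpow (hsplit ▸ ENNReal.lintegral_mul_le_Lp_mul_Lq _ hpq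
    (by fun_prop : Measurable φ).aemeasurable (by fun_prop : Measurable ψ).aemeasurable) hp0.le
  rw [hφ, hψ, ENNReal.mul_rpow_of_nonneg _ _ hp0.le, ← ENNReal.rpow_mul, ← ENNReal.rpow_mul,
    one_div_mul_cancel hp0.ne', ENNReal.rpow_one] at hholder
  rw [show 1 / p.conjExponent * p = p - 1 by rw [← hpq.div_conj_eq_sub_one]; ring,
    ENNReal.ofReal_mul hp0.le, ENNReal.mul_rpow_of_nonneg _ _ (by linarith),
    ofReal_rpow_rpow ht, show -1 / p * (p - 1) = 1 / p - 1 by field_simp; ring] at hholder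
  exact hholder.trans_eq (by ring)

/-- Hardy's inequality for the dual averaging operator `h ↦ ∫_t^∞ h(u) du/u`. -/
theorem lintegral_rpow_lintegral_Ioi_div_le {p : ℝ} (hp : 1 < p) {h : ℝ → ℝ≥0∞}
    (hh : Measurable h) :
    ∫⁻ t in Ioi 0, (∫⁻ u in Ioi t, h u / ENNReal.ofReal u) ^ p ≤
      ENNReal.ofReal p ^ p * ∫⁻ u in Ioi 0, h u ^ p := by
  have hp0 : 0 < p := by linarith
  have hinner : ∀ u ∈ Ioi (0 : ℝ), h u ^ p * ENNReal.ofReal (u ^ (-1 / p)) *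
      ∫⁻ t in Ioo 0 u, ENNReal.ofReal (t ^ (1 / p - 1)) = ENNReal.ofReal p * h u ^ p := by
    intro u hu
    rw [lintegral_Ioo_ofReal_rpow hu (by linarith [one_div_pos.mpr hp0]),
      show 1 / p - 1 + 1 = 1 / p by ring,
      show u ^ (1 / p) / (1 / p) = p * u ^ (1 / p) by field_simp, ENNReal.ofReal_mul hp0.le]
    calc _ = ENNReal.ofReal p * h u ^ p *
          (ENNReal.ofReal (u ^ (-1 / p)) * ENNReal.ofReal (u ^ (1 / p))) := by ring
      _ = ENNReal.ofReal p * h u ^ p := by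
        rw [ofReal_rpow_mul_ofReal_rpow hu, neg_div, neg_add_cancel, Real.rpow_zero,
          ENNReal.ofReal_one, mul_one]
  calc ∫⁻ t in Ioi 0, (∫⁻ u in Ioi t, h u / ENNReal.ofReal u) ^ p
      ≤ ∫⁻ t in Ioi 0, ENNReal.ofReal p ^ (p - 1) * (ENNReal.ofReal (t ^ (1 / p - 1)) *
          ∫⁻ u in Ioi t, h u ^ p * ENNReal.ofReal (u ^ (-1 / p))) :=
        setLIntegral_mono' measurableSet_Ioi fun t ht => lintegral_Ioi_div_rpow_le hp hh ht
    _ = ENNReal.ofReal p ^ (p - 1) * ∫⁻ u in Ioi 0, h u ^ p * ENNReal.ofReal (u ^ (-1 / p)) *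
          ∫⁻ t in Ioo 0 u, ENNReal.ofReal (t ^ (1 / p - 1)) := by
        rw [lintegral_const_mul' _ _
            (ENNReal.rpow_ne_top_of_nonneg (by linarith) ENNReal.ofReal_ne_top),
          lintegral_Ioi_mul_lintegral_Ioi_swap (by fun_prop) (by fun_prop)]
    _ = ENNReal.ofReal p ^ p * ∫⁻ u in Ioi 0, h u ^ p := by
        rw [setLIntegral_congr_fun measurableSet_Ioi hinner, lintegral_const_mul _ (by fun_prop),
          ← mul_assoc]
        congr 1
        simpa using (ENNReal.rpow_add_of_nonneg (x := ENNReal.ofReal p) _ _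
          (by linarith : 0 ≤ p - 1) zero_le_one).symm

noncomputable def cesaro (f : ℝ → ℝ) (t : ℝ) : ℝ≥0∞ :=
  (∫⁻ s in Ioo 0 t, ENNReal.ofReal |f s|) / ENNReal.ofReal t

lemma measurable_cesaro (f : ℝ → ℝ) : Measurable (cesaro f) := by
  have hmono : Monotone fun t => ∫⁻ s in Ioo 0 t, ENNReal.ofReal |f s| :=
    fun _ _ hts => lintegral_mono_set (Ioo_subset_Ioo_right hts)
  exact hmono.measurable.div (by fun_prop)

/-- `min(1, t/s) = t / max(s, t) = t ∫_{max(s,t)}^∞ u⁻² du`. -/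
lemma ofReal_min_one_div_eq {s t : ℝ} (hs : 0 < s) (ht : 0 < t) :
    ENNReal.ofReal (min 1 (t / s)) =
      ENNReal.ofReal t *
        ∫⁻ u in Ioi s, (Ioi t).indicator (fun u => ENNReal.ofReal (u ^ (-2 : ℝ))) u := by
  rw [lintegral_indicator measurableSet_Ioi, Measure.restrict_restrict measurableSet_Ioi,
    Ioi_inter_Ioi, lintegral_Ioi_ofReal_rpow (lt_max_of_lt_left ht) (by norm_num),
    ← ENNReal.ofReal_mul ht.le]
  congr 1
  norm_num [Real.rpow_neg_one]
  rcases le_total s t with hst | hts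
  · rw [max_eq_left hst, min_eq_left ((one_le_div hs).mpr hst), mul_inv_cancel₀ ht.ne']
  · rw [max_eq_right hts, min_eq_right ((div_le_one hs).mpr hts), div_eq_mul_inv]

lemma cesaro_le_Kf_div (f : ℝ → ℝ) (t : ℝ) :
    cesaro f t ≤ Kf f t / ENNReal.ofReal t := by
  refine ENNReal.div_le_div_right ?_ _
  calc ∫⁻ s in Ioo 0 t, ENNReal.ofReal |f s|
      = ∫⁻ s in Ioo 0 t, ENNReal.ofReal (min 1 (t / s) * |f s|) :=
        setLIntegral_congr_fun measurableSet_Ioo fun s hs => by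
          rw [min_eq_left ((one_le_div hs.1).mpr hs.2.le), one_mul]
    _ ≤ Kf f t := lintegral_mono_set Ioo_subset_Ioi_self

lemma Kf_div_eq_lintegral_cesaro {f : ℝ → ℝ} (hf : Measurable f) {t : ℝ} (ht : 0 < t) :
    Kf f t / ENNReal.ofReal t = ∫⁻ u in Ioi t, cesaro f u / ENNReal.ofReal u := by
  set k := (Ioi t).indicator fun u => ENNReal.ofReal (u ^ (-2 : ℝ))
  have hK : Kf f t =
      ENNReal.ofReal t * ∫⁻ u in Ioi 0, k u * ∫⁻ s in Ioo 0 u, ENNReal.ofReal |f s| := by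
    rw [← lintegral_Ioi_mul_lintegral_Ioi_swap (by fun_prop)
      ((by fun_prop : Measurable fun u : ℝ => ENNReal.ofReal (u ^ (-2 : ℝ))).indicator
        measurableSet_Ioi),
      ← lintegral_const_mul' _ _ ENNReal.ofReal_ne_top]
    refine setLIntegral_congr_fun measurableSet_Ioi fun s hs => ?_
    rw [ENNReal.ofReal_mul (le_min zero_le_one (div_nonneg ht.le (le_of_lt hs))),
      ofReal_min_one_div_eq hs ht]
    ring
  have hk : ∫⁻ u in Ioi 0, k u * ∫⁻ s in Ioo 0 u, ENNReal.ofReal |f s| =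
      ∫⁻ u in Ioi t, cesaro f u / ENNReal.ofReal u := by
    have hind : (fun u => k u * ∫⁻ s in Ioo 0 u, ENNReal.ofReal |f s|) = (Ioi t).indicator
        fun u => ENNReal.ofReal (u ^ (-2 : ℝ)) * ∫⁻ s in Ioo 0 u, ENNReal.ofReal |f s| :=
      funext fun u => by simp only [k, indicator_mul_left]
    rw [hind, lintegral_indicator measurableSet_Ioi, Measure.restrict_restrict measurableSet_Ioi,
      inter_eq_left.mpr (Ioi_subset_Ioi ht.le)]
    refine setLIntegral_congr_fun measurableSet_Ioi fun u hu => ?_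
    rw [cesaro, div_ofReal_eq_mul_rpow_neg_one _ (ht.trans hu),
      div_ofReal_eq_mul_rpow_neg_one _ (ht.trans hu), mul_assoc,
      ofReal_rpow_mul_ofReal_rpow (ht.trans hu)]
    norm_num
    ring
  rw [hK, hk]
  exact ((ENNReal.eq_div_iff (ENNReal.ofReal_pos.mpr ht).ne' ENNReal.ofReal_ne_top).mpr rfl).symm

theorem stmt13_general (p : ℝ) (hp : 1 < p) (f : ℝ → ℝ) (hf : Measurable f) :
    cesNorm f p ≤ (∫⁻ t in Set.Ioi (0:ℝ), (Kf f t / ENNReal.ofReal t) ^ p) ^ (1 / p) ∧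
    (∫⁻ t in Set.Ioi (0:ℝ), (Kf f t / ENNReal.ofReal t) ^ p) ^ (1 / p)
      ≤ ENNReal.ofReal p * cesNorm f p ∧
    ((∫⁻ t in Set.Ioi (0:ℝ), (Kf f t / ENNReal.ofReal t) ^ p) < ⊤ ↔
      (∫⁻ t in Set.Ioi (0:ℝ),
        ((∫⁻ s in Set.Ioo (0:ℝ) t, ENNReal.ofReal |f s|) / ENNReal.ofReal t) ^ p) < ⊤) := by
  have hp0 : 0 < p := by linarith
  set A := ∫⁻ t in Ioi (0:ℝ), (Kf f t / ENNReal.ofReal t) ^ p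
  set B := ∫⁻ t in Ioi (0:ℝ), cesaro f t ^ p
  have hBA : B ≤ A := lintegral_mono fun t => ENNReal.rpow_le_rpow (cesaro_le_Kf_div f t) hp0.le
  have hAB : A ≤ ENNReal.ofReal p ^ p * B :=
    calc A = ∫⁻ t in Ioi 0, (∫⁻ u in Ioi t, cesaro f u / ENNReal.ofReal u) ^ p :=
          setLIntegral_congr_fun measurableSet_Ioi fun t ht => by
            rw [Kf_div_eq_lintegral_cesaro hf ht]
      _ ≤ ENNReal.ofReal p ^ p * B := lintegral_rpow_lintegral_Ioi_div_le hp (measurable_cesaro f)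
  refine ⟨ENNReal.rpow_le_rpow hBA (by positivity), ?_, hBA.trans_lt, fun hB => hAB.trans_lt ?_⟩
  · calc A ^ (1 / p) ≤ (ENNReal.ofReal p ^ p * B) ^ (1 / p) :=
          ENNReal.rpow_le_rpow hAB (by positivity)
      _ = ENNReal.ofReal p * cesNorm f p := by
        rw [ENNReal.mul_rpow_of_nonneg _ _ (by positivity), ← ENNReal.rpow_mul,
          mul_one_div_cancel hp0.ne', ENNReal.rpow_one]
        rfl
  · exact ENNReal.mul_lt_top (ENNReal.rpow_lt_top_of_nonneg hp0.le ENNReal.ofReal_ne_top) hB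

/-- For `1 < p < ∞` and measurable `f` with `K(t,f) < ∞` for all `t > 0`:
`‖C|f|‖_{L^p} ≤ (∫_0^∞ (K(t,f)/t)^p dt)^{1/p} ≤ p·‖C|f|‖_{L^p}`; consequently
`f ∈ (L^1, L^1(1/s))_{1−1/p, p}` iff `C|f| ∈ L^p(0,∞)`, i.e.
`(L^1, L^1(1/s))_{1−1/p,p} = Ces_p[0,∞)` with equivalent norms. -/
theorem stmt13 (p : ℝ) (hp : 1 < p) (f : ℝ → ℝ) (hf : Measurable f)
    (hK : ∀ t : ℝ, 0 < t → Kf f t < ⊤) :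
    cesNorm f p ≤ (∫⁻ t in Set.Ioi (0:ℝ), (Kf f t / ENNReal.ofReal t) ^ p) ^ (1 / p) ∧
    (∫⁻ t in Set.Ioi (0:ℝ), (Kf f t / ENNReal.ofReal t) ^ p) ^ (1 / p)
      ≤ ENNReal.ofReal p * cesNorm f p ∧
    ((∫⁻ t in Set.Ioi (0:ℝ), (Kf f t / ENNReal.ofReal t) ^ p) < ⊤ ↔
      (∫⁻ t in Set.Ioi (0:ℝ),
        ((∫⁻ s in Set.Ioo (0:ℝ) t, ENNReal.ofReal |f s|) / ENNReal.ofReal t) ^ p) < ⊤) :=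
  stmt13_general p hp f hf
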